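/- arXiv:1906.09047 — 6 statements merged into one kernel-verified Lean document; each statement's English description precedes it below -/
import Mathlib

section
/- Let (X_t) be a stochastic process adapted to a filtration F_t taking values in a state space S ⊆ ℝ≥0 with 0 ∈ S, and let T = min{t : X_t = 0}. If there exists δ > 0 such that for all t < T, E[X_t − X_{t+1} | F_t] ≥ δ, then E[T | F_0] ≤ X_0/δ. -/
/-!
Write `T = ∑ₜ 1{t < T}`, so that `∫_s T = ∑ₜ μ(s ∩ {t < T})`. The event `{t < T}` is
`ℱ t`-measurable, so the drift condition integrates to
`δ μ(s ∩ {t < T}) ≤ ∫_{s ∩ {t < T}} (X t - X (t+1))`. Since `{t + 1 < T} ⊆ {t < T}` and `X ≥ 0`,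
the right-hand sides telescope, and every partial sum of `δ μ(s ∩ {t < T})` is at most `∫_s X 0`.
-/

open MeasureTheory
open scoped ENNReal

/-- First hitting time of state `0`, valued in `ℕ∞` (`⊤` if never hit). -/
noncomputable def hittingTimeZero {Ω : Type*} (X : ℕ → Ω → ℝ) (ω : Ω) : ℕ∞ :=
  ⨅ (t : ℕ) (_ : X t ω = 0), (t : ℕ∞)

lemma ENat.toENNReal_eq_tsum_ite_lt (a : ℕ∞) :
    (a : ℝ≥0∞) = ∑' t : ℕ, if (t : ℕ∞) < a then 1 else 0 := by
  cases a with
  | top => simp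
  | coe n =>
    rw [tsum_eq_sum (s := Finset.range n) fun t ht => by simpa using ht]
    simp [Finset.filter_true_of_mem fun t ht => Finset.mem_range.mp ht]

section Measure

variable {Ω : Type*} {m0 : MeasurableSpace Ω}

lemma lintegral_enat_eq_tsum_measure_lt (μ : Measure Ω) {τ : Ω → ℕ∞}
    (hτ : ∀ t : ℕ, MeasurableSet {ω | (t : ℕ∞) < τ ω}) :
    ∫⁻ ω, τ ω ∂μ = ∑' t : ℕ, μ {ω | (t : ℕ∞) < τ ω} := by
  have hsum ω : (τ ω : ℝ≥0∞) = ∑' t : ℕ, {ω | (t : ℕ∞) < τ ω}.indicator 1 ω := by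
    simp only [ENat.toENNReal_eq_tsum_ite_lt, Set.indicator_apply, Set.mem_ofPred_eq,
      Pi.one_apply]
  rw [lintegral_congr fun ω => hsum ω,
    lintegral_tsum fun t => (measurable_one.indicator (hτ t)).aemeasurable]
  exact tsum_congr fun t => lintegral_indicator_one (hτ t)

lemma mul_measureReal_le_setIntegral_of_le_condExp {μ : Measure Ω} [IsFiniteMeasure μ]
    {m : MeasurableSpace Ω} (hm : m ≤ m0) {f : Ω → ℝ} (hf : Integrable f μ) {B : Set Ω}
    (hB : MeasurableSet[m] B) {δ : ℝ} (hδ : ∀ᵐ ω ∂μ, ω ∈ B → δ ≤ μ[f|m] ω) :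
    δ * μ.real B ≤ ∫ ω in B, f ω ∂μ := by
  calc δ * μ.real B = ∫ _ in B, δ ∂μ := by rw [setIntegral_const, smul_eq_mul, mul_comm]
    _ ≤ ∫ ω in B, μ[f|m] ω ∂μ := by
      refine setIntegral_mono_ae_restrict integrableOn_const integrable_condExp.integrableOn ?_
      rw [Filter.EventuallyLE, ae_restrict_iff' (hm B hB)]
      exact hδ
    _ = ∫ ω in B, f ω ∂μ := setIntegral_condExp hm hf hB

end Measure

section Drift

variable {Ω : Type*} {m0 : MeasurableSpace Ω} {ν : Measure Ω} {X : ℕ → Ω → ℝ} {B : ℕ → Set Ω}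
  {δ : ℝ}

lemma sum_mul_measureReal_le_integral_of_drift (hB : Antitone B) (hX : ∀ t ω, 0 ≤ X t ω)
    (hint : ∀ t, Integrable (X t) ν)
    (hdrift : ∀ t, δ * ν.real (B t) ≤ ∫ ω in B t, (X t ω - X (t + 1) ω) ∂ν) (n : ℕ) :
    ∑ t ∈ Finset.range n, δ * ν.real (B t) ≤ ∫ ω, X 0 ω ∂ν := by
  set g : ℕ → ℝ := fun t => ∫ ω in B t, X t ω ∂ν
  have hstep t : δ * ν.real (B t) ≤ g t - g (t + 1) := by
    have hmono : g (t + 1) ≤ ∫ ω in B t, X (t + 1) ω ∂ν :=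
      setIntegral_mono_set (hint (t + 1)).integrableOn (.of_forall (hX (t + 1)))
        (hB t.le_succ).eventuallyLE
    have := hdrift t
    rw [integral_sub (hint t).integrableOn (hint (t + 1)).integrableOn] at this
    linarith
  calc ∑ t ∈ Finset.range n, δ * ν.real (B t)
      ≤ ∑ t ∈ Finset.range n, (g t - g (t + 1)) := Finset.sum_le_sum fun t _ => hstep t
    _ = g 0 - g n := Finset.sum_range_sub' g n
    _ ≤ ∫ ω, X 0 ω ∂ν := by
      have hg0 : g 0 ≤ ∫ ω, X 0 ω ∂ν := setIntegral_le_integral (hint 0) (.of_forall (hX 0))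
      have hgn : 0 ≤ g n := setIntegral_nonneg_of_ae (.of_forall (hX n))
      linarith

lemma tsum_measure_le_of_drift [IsFiniteMeasure ν] (hδ : 0 < δ) (hB : Antitone B)
    (hX : ∀ t ω, 0 ≤ X t ω) (hint : ∀ t, Integrable (X t) ν)
    (hdrift : ∀ t, δ * ν.real (B t) ≤ ∫ ω in B t, (X t ω - X (t + 1) ω) ∂ν) :
    ∑' t, ν (B t) ≤ ENNReal.ofReal ((∫ ω, X 0 ω ∂ν) / δ) := by
  refine ENNReal.tsum_le_of_sum_range_le fun n => ?_
  rw [← ENNReal.ofReal_toReal (ENNReal.sum_ne_top.mpr fun t _ => measure_ne_top ν (B t)),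
    ENNReal.toReal_sum fun t _ => measure_ne_top ν (B t)]
  refine ENNReal.ofReal_le_ofReal ?_
  rw [le_div_iff₀' hδ, Finset.mul_sum]
  exact sum_mul_measureReal_le_integral_of_drift hB hX hint hdrift n

end Drift

lemma lt_hittingTimeZero_iff {Ω : Type*} {X : ℕ → Ω → ℝ} {ω : Ω} {t : ℕ} :
    (t : ℕ∞) < hittingTimeZero X ω ↔ ∀ u ≤ t, X u ω ≠ 0 := by
  rw [← ENat.add_one_le_iff (ENat.natCast_ne_top t), hittingTimeZero, le_iInf₂_iff]
  refine forall_congr' fun u => ?_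
  rw [← ENat.natCast_one, ← ENat.natCast_add, ENat.natCast_le_natCast]
  by_cases hu : X u ω = 0 <;> simp [hu]

lemma measurableSet_lt_hittingTimeZero {Ω : Type*} {m0 : MeasurableSpace Ω}
    {ℱ : Filtration ℕ m0} {X : ℕ → Ω → ℝ} (hX : Adapted ℱ X) (t : ℕ) :
    MeasurableSet[ℱ t] {ω | (t : ℕ∞) < hittingTimeZero X ω} := by
  have : {ω | (t : ℕ∞) < hittingTimeZero X ω} =
      ⋂ u ∈ Finset.range (t + 1), {ω | X u ω ≠ 0} := by
    ext ω
    simp [lt_hittingTimeZero_iff]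
  rw [this]
  exact Finset.measurableSet_biInter _ fun u hu =>
    ℱ.mono (Nat.lt_succ_iff.mp (Finset.mem_range.mp hu)) _
      ((hX u) (measurableSet_singleton 0)).compl

/-- Additive drift theorem, upper bound: if the process on `ℝ≥0` (adapted to a
filtration `ℱ`) has drift at least `δ > 0` towards `0` on the event `t < T`,
then `E[T | ℱ 0] ≤ X 0 / δ` (stated via set integrals over `ℱ 0`-measurable sets). -/
theorem additive_drift_upper
    {Ω : Type*} {m0 : MeasurableSpace Ω} {μ : Measure Ω} [IsProbabilityMeasure μ]
    (ℱ : Filtration ℕ m0) (X : ℕ → Ω → ℝ)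
    (hadapted : Adapted ℱ X)
    (hnonneg : ∀ t ω, 0 ≤ X t ω)
    (hint : ∀ t, Integrable (X t) μ)
    (δ : ℝ) (hδ : 0 < δ)
    (hdrift : ∀ t : ℕ, ∀ᵐ ω ∂μ,
      (t : ℕ∞) < hittingTimeZero X ω →
        δ ≤ (μ[fun ω => X t ω - X (t + 1) ω | ℱ t]) ω) :
    ∀ s : Set Ω, MeasurableSet[ℱ 0] s →
      ∫⁻ ω in s, (hittingTimeZero X ω : ENNReal) ∂μ
        ≤ ∫⁻ ω in s, ENNReal.ofReal (X 0 ω / δ) ∂μ := by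
  intro s hs
  set A : ℕ → Set Ω := fun t => {ω | (t : ℕ∞) < hittingTimeZero X ω}
  have hA t : MeasurableSet (A t) := ℱ.le t _ (measurableSet_lt_hittingTimeZero hadapted t)
  have hA_anti : Antitone A := fun t u htu ω (hω : (u : ℕ∞) < _) =>
    show (t : ℕ∞) < _ from lt_of_le_of_lt (by exact_mod_cast htu) hω
  have hstep t : δ * (μ.restrict s).real (A t)
      ≤ ∫ ω in A t, (X t ω - X (t + 1) ω) ∂μ.restrict s := by
    rw [measureReal_restrict_apply (hA t), Measure.restrict_restrict (hA t)]
    refine mul_measureReal_le_setIntegral_of_le_condExp (ℱ.le t) ((hint t).sub (hint (t + 1)))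
      ((measurableSet_lt_hittingTimeZero hadapted t).inter (ℱ.mono t.zero_le _ hs)) ?_
    filter_upwards [hdrift t] with ω h hω using h hω.1
  calc ∫⁻ ω in s, (hittingTimeZero X ω : ENNReal) ∂μ = ∑' t, μ.restrict s (A t) :=
        lintegral_enat_eq_tsum_measure_lt _ hA
    _ ≤ ENNReal.ofReal ((∫ ω in s, X 0 ω ∂μ) / δ) :=
        tsum_measure_le_of_drift hδ hA_anti hnonneg (fun t => (hint t).restrict) hstep
    _ = ∫⁻ ω in s, ENNReal.ofReal (X 0 ω / δ) ∂μ := by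
        rw [← integral_div, ofReal_integral_eq_lintegral_ofReal
          ((hint 0).integrableOn.div_const δ) (.of_forall fun ω => div_nonneg (hnonneg 0 ω) hδ.le)]
end

section
/- Let (X_t) be a non-increasing Markov process on {0, ..., N}, Δ : {1, ..., N} → (0, ∞) with E[X_t − X_{t+1} | X_t = k] ≤ Δ(k) for all k. Define η(k) = E[Σ_{j=X_{t+1}+1}^{k} 1/Δ(j) | X_t = k] and η* = max_{k=1,...,N} η(k). Then the first hitting time T = min{t : X_t = 0} satisfies E[T | X_0] ≥ Σ_{k=1}^{X_0} 1/(η* Δ(k)). -/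
open MeasureTheory ProbabilityTheory Finset

/-- First hitting time of state `0` for an `ℕ`-valued process, valued in `ℕ∞`. -/
noncomputable def hitZero {Ω : Type*} (X : ℕ → Ω → ℕ) (ω : Ω) : ℕ∞ :=
  ⨅ (t : ℕ) (_ : X t ω = 0), (t : ℕ∞)

/-- `(X_t)` is a time-homogeneous Markov process with one-step transition
probabilities `p`. -/
def IsMarkovWith {Ω : Type*} [MeasurableSpace Ω] (μ : Measure Ω)
    (X : ℕ → Ω → ℕ) (p : ℕ → ℕ → ℝ) : Prop :=
  ∀ (t k j : ℕ) (A : Set Ω),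
    MeasurableSet[MeasurableSpace.comap (fun ω (i : Fin (t + 1)) => X i ω) inferInstance] A →
      μ (A ∩ {ω | X t ω = k} ∩ {ω | X (t + 1) ω = j})
        = ENNReal.ofReal (p k j) * μ (A ∩ {ω | X t ω = k})

open scoped ENNReal

/-!
With the potential `g k = ∑_{1 ≤ i ≤ k} 1 / Δ i`, a step from a nonzero state `k` decreases
`g (X t)` by `η k ≤ η*` in expectation, and a step from `0` does not change it. Along a path
that reaches `0` the decrements telescope to `g (X 0)`, so taking expectations,
`g k0 ≤ η* ∑_t P(X t ≠ 0) = η* E[T]`. Working in `ℝ≥0∞` with weights `ofReal (1 / Δ i)`, all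
decrements are nonnegative and monotone convergence applies without integrability conditions.
-/

theorem Finset.sum_range_sum_Ioc_of_antitone {M : Type*} [AddCommMonoid M] (w : ℕ → M)
    {x : ℕ → ℕ} (hx : Antitone x) (m : ℕ) :
    ∑ t ∈ range m, ∑ i ∈ Ioc (x (t + 1)) (x t), w i = ∑ i ∈ Ioc (x m) (x 0), w i := by
  induction m with
  | zero => simp
  | succ m ih =>
    rw [sum_range_succ, ih, add_comm, sum_Ioc_consecutive _ (hx m.le_succ) (hx m.zero_le)]

theorem tsum_sum_Ioc_of_antitone {M : Type*} [AddCommMonoid M] [TopologicalSpace M]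
    (w : ℕ → M) {x : ℕ → ℕ} (hx : Antitone x) {n : ℕ} (hn : x n = 0) :
    ∑' t, ∑ i ∈ Ioc (x (t + 1)) (x t), w i = ∑ i ∈ Ioc 0 (x 0), w i := by
  have hzero : ∀ t, n ≤ t → x t = 0 := fun t ht => Nat.le_zero.mp (hn ▸ hx ht)
  rw [tsum_eq_sum (s := range n), sum_range_sum_Ioc_of_antitone w hx, hn]
  intro t ht
  rw [hzero t (by simpa using ht), hzero (t + 1) (by simp at ht; omega), Ioc_self, sum_empty]

theorem ENat.tsum_ite_lt (n : ℕ∞) :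
    ∑' t : ℕ, (if (t : ℕ∞) < n then 1 else 0 : ℝ≥0∞) = n := by
  induction n with
  | top =>
    simp only [ENat.natCast_lt_top, if_true, ENat.toENNReal_top]
    exact ENNReal.tsum_const_eq_top_of_ne_zero one_ne_zero
  | coe n =>
    rw [tsum_eq_sum (s := range n) fun t ht => by simpa using ht]
    simp only [Nat.cast_lt]
    rw [sum_ite_of_true fun t ht => mem_range.1 ht]
    simp

section HittingTime

variable {Ω : Type*} {X : ℕ → Ω → ℕ} {ω : Ω}

theorem lt_hitZero_iff (hX : Antitone (X · ω)) {t : ℕ} :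
    (t : ℕ∞) < hitZero X ω ↔ X t ω ≠ 0 := by
  constructor
  · exact fun h h0 => (iInf₂_le (f := fun s (_ : X s ω = 0) => (s : ℕ∞)) t h0).not_gt h
  · intro h
    refine (Nat.cast_lt.2 t.lt_succ_self).trans_le (le_iInf₂ fun s hs => Nat.cast_le.2 ?_)
    by_contra! hst
    exact h (Nat.le_zero.1 (hs ▸ hX (Nat.lt_succ_iff.1 hst)))

theorem hitZero_eq_tsum_indicator (hX : Antitone (X · ω)) :
    (hitZero X ω : ℝ≥0∞) = ∑' t, {ω | X t ω ≠ 0}.indicator 1 ω := by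
  simp_rw [Set.indicator_apply, Set.mem_ofPred_eq, ← lt_hitZero_iff hX]
  exact (ENat.tsum_ite_lt _).symm

end HittingTime

section HittingTimeIntegral

variable {Ω : Type*} {_ : MeasurableSpace Ω} {X : ℕ → Ω → ℕ}

theorem measurable_hitZero (hmeas : ∀ t, Measurable (X t)) (hX : ∀ ω, Antitone (X · ω)) :
    Measurable fun ω => (hitZero X ω : ℝ≥0∞) := by
  simp_rw [hitZero_eq_tsum_indicator (hX _)]
  exact Measurable.tsum fun t => measurable_one.indicator (hmeas t (measurableSet_singleton 0)).compl

theorem lintegral_hitZero (ν : Measure Ω) (hmeas : ∀ t, Measurable (X t))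
    (hX : ∀ ω, Antitone (X · ω)) :
    ∫⁻ ω, hitZero X ω ∂ν = ∑' t, ν {ω | X t ω ≠ 0} := by
  have hne : ∀ t, MeasurableSet {ω | X t ω ≠ 0} := fun t =>
    (hmeas t (measurableSet_singleton 0)).compl
  simp_rw [hitZero_eq_tsum_indicator (hX _),
    lintegral_tsum fun t => (measurable_one.indicator (hne t)).aemeasurable,
    lintegral_indicator_one (hne _)]

theorem ae_hitZero_ne_top {ν : Measure Ω} (hmeas : ∀ t, Measurable (X t))
    (hX : ∀ ω, Antitone (X · ω)) (hT : ∫⁻ ω, hitZero X ω ∂ν ≠ ⊤) :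
    ∀ᵐ ω ∂ν, hitZero X ω ≠ ⊤ := by
  filter_upwards [ae_lt_top' (measurable_hitZero hmeas hX).aemeasurable hT] with ω hω
  exact ENat.toENNReal_ne_top.1 hω.ne

end HittingTimeIntegral

theorem lintegral_comp_eq_tsum {Ω α : Type*} {_ : MeasurableSpace Ω} [MeasurableSpace α]
    [Countable α] [MeasurableSingletonClass α] {ν : Measure Ω} {Y : Ω → α} (hY : Measurable Y)
    (f : α → ℝ≥0∞) :
    ∫⁻ ω, f (Y ω) ∂ν = ∑' a, f a * ν (Y ⁻¹' {a}) := by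
  rw [← lintegral_map Measurable.of_discrete hY, lintegral_countable']
  simp_rw [Measure.map_apply hY (measurableSet_singleton _)]

theorem lintegral_comp_cond_eq {Ω α : Type*} {_ : MeasurableSpace Ω} {μ : Measure Ω}
    [IsFiniteMeasure μ] {Y : Ω → α} {a : α} (hs : MeasurableSet {ω | Y ω = a})
    (hne : μ {ω | Y ω = a} ≠ 0) (f : α → ℝ≥0∞) :
    ∫⁻ ω, f (Y ω) ∂μ[|{ω | Y ω = a}] = f a := by
  have := cond_isProbabilityMeasure hne
  rw [lintegral_congr_ae ((ae_cond_mem hs).mono fun ω hω => congrArg f hω), lintegral_const,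
    measure_univ, mul_one]

namespace IsMarkovWith

variable {Ω : Type*} {_ : MeasurableSpace Ω} {X : ℕ → Ω → ℕ} {p : ℕ → ℕ → ℝ}

theorem measure_inter_eq {ν : Measure Ω} (h : IsMarkovWith ν X p) (t k j : ℕ) :
    ν ({ω | X t ω = k} ∩ {ω | X (t + 1) ω = j}) = ENNReal.ofReal (p k j) * ν {ω | X t ω = k} := by
  simpa using h t k j Set.univ MeasurableSet.univ

theorem cond_initial {μ : Measure Ω} (h : IsMarkovWith μ X p) (hX0 : Measurable (X 0))
    (k0 : ℕ) : IsMarkovWith μ[|{ω | X 0 ω = k0}] X p := by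
  intro t k j A hA
  have hinit : MeasurableSet[MeasurableSpace.comap (fun ω (i : Fin (t + 1)) => X i ω)
      inferInstance] {ω | X 0 ω = k0} :=
    ⟨(fun f : Fin (t + 1) → ℕ => f ⟨0, t.succ_pos⟩) ⁻¹' {k0},
      (measurable_pi_apply _) (measurableSet_singleton k0), rfl⟩
  have hstep := h t k j _ (hinit.inter hA)
  simp only [Set.inter_assoc] at hstep ⊢
  have hs : MeasurableSet {ω | X 0 ω = k0} := hX0 (measurableSet_singleton k0)
  rw [cond_apply hs, cond_apply hs, hstep, mul_left_comm]

end IsMarkovWith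

/-- The `η k` of the variable drift theorem, for weights `w = 1 / Δ`. -/
noncomputable def expectedDecrease (p : ℕ → ℕ → ℝ) (w : ℕ → ℝ≥0∞) (k : ℕ) : ℝ≥0∞ :=
  ∑' j, ENNReal.ofReal (p k j) * ∑ i ∈ Ioc j k, w i

@[simp]
theorem expectedDecrease_zero (p : ℕ → ℕ → ℝ) (w : ℕ → ℝ≥0∞) : expectedDecrease p w 0 = 0 := by
  simp [expectedDecrease]

namespace IsMarkovWith

variable {Ω : Type*} {_ : MeasurableSpace Ω} {ν : Measure Ω} {X : ℕ → Ω → ℕ} {p : ℕ → ℕ → ℝ}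
  {N : ℕ} {w : ℕ → ℝ≥0∞} {η : ℝ≥0∞}

theorem lintegral_sum_Ioc_le (h : IsMarkovWith ν X p) (hmeas : ∀ t, Measurable (X t))
    (hrange : ∀ t ω, X t ω ≤ N) (hη : ∀ k, 1 ≤ k → k ≤ N → expectedDecrease p w k ≤ η)
    (t : ℕ) :
    ∫⁻ ω, ∑ i ∈ Ioc (X (t + 1) ω) (X t ω), w i ∂ν ≤ η * ν {ω | X t ω ≠ 0} := by
  have hpair : Measurable fun ω => (X t ω, X (t + 1) ω) := (hmeas t).prodMk (hmeas (t + 1))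
  calc ∫⁻ ω, ∑ i ∈ Ioc (X (t + 1) ω) (X t ω), w i ∂ν
      = ∑' k, ∑' j, (∑ i ∈ Ioc j k, w i) * ν ({ω | X t ω = k} ∩ {ω | X (t + 1) ω = j}) := by
        rw [lintegral_comp_eq_tsum hpair (fun q => ∑ i ∈ Ioc q.2 q.1, w i), ← ENNReal.tsum_prod]
        congr! with ⟨k, j⟩
        ext ω
        simp
    _ = ∑' k, expectedDecrease p w k * ν {ω | X t ω = k} := by
        simp_rw [h.measure_inter_eq, expectedDecrease, ← ENNReal.tsum_mul_right, mul_left_comm,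
          mul_assoc]
    _ = ∫⁻ ω, expectedDecrease p w (X t ω) ∂ν := (lintegral_comp_eq_tsum (hmeas t) _).symm
    _ ≤ ∫⁻ ω, {ω | X t ω ≠ 0}.indicator (fun _ => η) ω ∂ν := lintegral_mono fun ω => by
        by_cases h0 : X t ω = 0
        · simp [h0]
        · simpa [h0] using hη _ (Nat.one_le_iff_ne_zero.2 h0) (hrange t ω)
    _ = η * ν {ω | X t ω ≠ 0} :=
        lintegral_indicator_const (hmeas t (measurableSet_singleton 0)).compl η

theorem lintegral_potential_le (h : IsMarkovWith ν X p) (hmeas : ∀ t, Measurable (X t))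
    (hrange : ∀ t ω, X t ω ≤ N) (hX : ∀ ω, Antitone (X · ω))
    (hη : ∀ k, 1 ≤ k → k ≤ N → expectedDecrease p w k ≤ η)
    (hT : ∫⁻ ω, hitZero X ω ∂ν ≠ ⊤) :
    ∫⁻ ω, ∑ i ∈ Ioc 0 (X 0 ω), w i ∂ν ≤ η * ∫⁻ ω, hitZero X ω ∂ν := by
  have htelescope : ∀ᵐ ω ∂ν,
      ∑ i ∈ Ioc 0 (X 0 ω), w i = ∑' t, ∑ i ∈ Ioc (X (t + 1) ω) (X t ω), w i := by
    filter_upwards [ae_hitZero_ne_top hmeas hX hT] with ω hω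
    obtain ⟨n, hn⟩ := ENat.ne_top_iff_exists.1 hω
    have hXn : X n ω = 0 := by
      simpa using (lt_hitZero_iff (hX ω)).not.1 (hn ▸ lt_irrefl _)
    exact (tsum_sum_Ioc_of_antitone w (hX ω) hXn).symm
  calc ∫⁻ ω, ∑ i ∈ Ioc 0 (X 0 ω), w i ∂ν
      = ∫⁻ ω, ∑' t, ∑ i ∈ Ioc (X (t + 1) ω) (X t ω), w i ∂ν := lintegral_congr_ae htelescope
    _ = ∑' t, ∫⁻ ω, ∑ i ∈ Ioc (X (t + 1) ω) (X t ω), w i ∂ν :=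
        lintegral_tsum fun t =>
          ((Measurable.of_discrete (f := fun q : ℕ × ℕ => ∑ i ∈ Ioc q.2 q.1, w i)).comp
          ((hmeas t).prodMk (hmeas (t + 1)))).aemeasurable
    _ ≤ ∑' t, η * ν {ω | X t ω ≠ 0} :=
        ENNReal.tsum_le_tsum fun t => h.lintegral_sum_Ioc_le hmeas hrange hη t
    _ = η * ∫⁻ ω, hitZero X ω ∂ν := by rw [ENNReal.tsum_mul_left, lintegral_hitZero ν hmeas hX]

end IsMarkovWith

theorem expectedDecrease_ofReal {p : ℕ → ℕ → ℝ} (hp : ∀ k j, 0 ≤ p k j) {v : ℕ → ℝ} {k : ℕ}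
    (hv : ∀ i, 1 ≤ i → i ≤ k → 0 ≤ v i) :
    expectedDecrease p (fun i => ENNReal.ofReal (v i)) k
      = ENNReal.ofReal (∑ l ∈ range k, p k l * ∑ i ∈ Icc (l + 1) k, v i) := by
  have hinner : ∀ l, 0 ≤ ∑ i ∈ Icc (l + 1) k, v i := fun l =>
    sum_nonneg fun i hi => hv i (by grind) (mem_Icc.1 hi).2
  rw [expectedDecrease, tsum_eq_sum (s := range k),
    ENNReal.ofReal_sum_of_nonneg fun l _ => mul_nonneg (hp k l) (hinner l)]
  · refine sum_congr rfl fun l _ => ?_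
    rw [ENNReal.ofReal_mul (hp k l), Icc_add_one_left_eq_Ioc,
      ENNReal.ofReal_sum_of_nonneg fun i hi => hv i (by grind) (mem_Ioc.1 hi).2]
  · intro j hj
    rw [Ioc_eq_empty (by simpa using hj), sum_empty, mul_zero]

theorem variable_drift_lower_with_error_general
    {Ω : Type*} {m0 : MeasurableSpace Ω} {μ : Measure Ω} [IsProbabilityMeasure μ]
    (N : ℕ) (X : ℕ → Ω → ℕ)
    (hmeas : ∀ t, Measurable (X t))
    (hrange : ∀ t ω, X t ω ≤ N)
    (hdec : ∀ t ω, X (t + 1) ω ≤ X t ω)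
    (p : ℕ → ℕ → ℝ)
    (hp0 : ∀ k j, 0 ≤ p k j)
    (hMarkov : IsMarkovWith μ X p)
    (Δ : ℕ → ℝ)
    (hΔpos : ∀ k, 1 ≤ k → k ≤ N → 0 < Δ k)
    (ηstar : ℝ)
    (hηstar : IsGreatest
      ((fun k => ∑ l ∈ range k, p k l * ∑ j ∈ Icc (l + 1) k, 1 / Δ j) ''
        (Set.Icc 1 N)) ηstar) :
    ∀ k0, k0 ≤ N → μ {ω | X 0 ω = k0} ≠ 0 →
      ENNReal.ofReal (∑ k ∈ Icc 1 k0, 1 / (ηstar * Δ k))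
        ≤ ∫⁻ ω, (hitZero X ω : ENNReal) ∂(μ[|{ω | X 0 ω = k0}]) := by
  intro k0 hk0N hA0
  have hw : ∀ i, 1 ≤ i → i ≤ N → 0 ≤ 1 / Δ i := fun i hi1 hiN =>
    (one_div_pos.2 (hΔpos i hi1 hiN)).le
  rcases le_or_gt ηstar 0 with hη | hη
  · refine (ENNReal.ofReal_of_nonpos (sum_nonpos fun k hk => ?_)).trans_le zero_le
    rw [mem_Icc] at hk
    exact one_div_nonpos.2 (mul_nonpos_of_nonpos_of_nonneg hη (hΔpos k hk.1 (hk.2.trans hk0N)).le)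
  rcases eq_or_ne (∫⁻ ω, hitZero X ω ∂(μ[|{ω | X 0 ω = k0}])) ⊤ with hT | hT
  · exact hT ▸ le_top
  have hdecrease : ∀ k, 1 ≤ k → k ≤ N →
      expectedDecrease p (fun i => ENNReal.ofReal (1 / Δ i)) k ≤ ENNReal.ofReal ηstar :=
    fun k hk1 hkN => by
      rw [expectedDecrease_ofReal hp0 fun i hi1 hik => hw i hi1 (hik.trans hkN)]
      exact ENNReal.ofReal_le_ofReal (hηstar.2 ⟨k, ⟨hk1, hkN⟩, rfl⟩)
  have hcore := (hMarkov.cond_initial (hmeas 0) k0).lintegral_potential_le hmeas hrange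
    (fun ω => antitone_nat_of_succ_le fun t => hdec t ω) hdecrease hT
  rw [lintegral_comp_cond_eq (hmeas 0 (measurableSet_singleton k0)) hA0
    (fun k => ∑ i ∈ Ioc 0 k, ENNReal.ofReal (1 / Δ i)), ← Icc_add_one_left_eq_Ioc, zero_add,
    ← ENNReal.ofReal_sum_of_nonneg fun i hi =>
      hw i (mem_Icc.1 hi).1 ((mem_Icc.1 hi).2.trans hk0N)] at hcore
  rw [← ENNReal.mul_le_mul_iff_right (ENNReal.ofReal_pos.2 hη).ne' ENNReal.ofReal_ne_top]
  refine Eq.trans_le ?_ hcore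
  rw [← ENNReal.ofReal_mul hη.le, mul_sum]
  exact congrArg _ (sum_congr rfl fun k _ => by field_simp)

/-- Variable drift theorem (lower bound, with error bound): for a non-increasing
Markov process on `{0, …, N}` whose drift from state `k` is at most `Δ k`, with
`η k = E[∑_{j=X_{t+1}+1}^{k} 1 / Δ j | X_t = k] = ∑_{ℓ<k} p k ℓ ∑_{j=ℓ+1}^{k} 1 / Δ j`
and `η* = max_{1 ≤ k ≤ N} η k`, the first hitting time of `0` satisfies
`E[T | X_0] ≥ ∑_{k=1}^{X_0} 1 / (η* Δ k)`. -/
theorem variable_drift_lower_with_error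
    {Ω : Type*} {m0 : MeasurableSpace Ω} {μ : Measure Ω} [IsProbabilityMeasure μ]
    (N : ℕ) (X : ℕ → Ω → ℕ)
    (hmeas : ∀ t, Measurable (X t))
    (hrange : ∀ t ω, X t ω ≤ N)
    (hdec : ∀ t ω, X (t + 1) ω ≤ X t ω)
    (p : ℕ → ℕ → ℝ)
    (hp0 : ∀ k j, 0 ≤ p k j)
    (hp1 : ∀ k, k ≤ N → ∑ j ∈ range (N + 1), p k j = 1)
    (hMarkov : IsMarkovWith μ X p)
    (Δ : ℕ → ℝ)
    (hΔpos : ∀ k, 1 ≤ k → k ≤ N → 0 < Δ k)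
    (hdrift : ∀ k, 1 ≤ k → k ≤ N →
      ∑ j ∈ range (N + 1), p k j * ((k : ℝ) - j) ≤ Δ k)
    (ηstar : ℝ)
    (hηstar : IsGreatest
      ((fun k => ∑ l ∈ range k, p k l * ∑ j ∈ Icc (l + 1) k, 1 / Δ j) ''
        (Set.Icc 1 N)) ηstar) :
    ∀ k0, k0 ≤ N → μ {ω | X 0 ω = k0} ≠ 0 →
      ENNReal.ofReal (∑ k ∈ Icc 1 k0, 1 / (ηstar * Δ k))
        ≤ ∫⁻ ω, (hitZero X ω : ENNReal) ∂(μ[|{ω | X 0 ω = k0}]) :=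
  variable_drift_lower_with_error_general (m0 := m0) N X hmeas hrange hdec p hp0 hMarkov Δ hΔpos
    ηstar hηstar
end

section
/- For k ∈ {0, ..., n+1} and n ≥ 1, the normalized drift Δ*_n(k) := Σ_{ℓ=1}^{k} C(k,ℓ) Σ_{j=0}^{ℓ−1} (ℓ−j) C(n+1−k, j) (1/n)^{j+ℓ} equals the coefficient of z^{−1} in the Laurent expansion of (1−z)^{−2} (1 + 1/(nz))^k (1 + z/n)^{n+1−k}. -/
open Finset Complex

/-- Normalized drift `Δ*_n(k)` of the (1+1) EA on OneMax. -/
noncomputable def deltaStar (n k : ℕ) : ℝ :=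
  ∑ l ∈ Icc 1 k, ∑ j ∈ range l,
    ((l : ℝ) - j) * (k.choose l) * ((n + 1 - k).choose j) * (1 / n) ^ (j + l)

/-!
Expanding both binomials turns the integrand into a finite combination of the functions
`z ^ (j - l) / (1 - z) ^ 2`, so it suffices that `I p := ∮ z ^ p / (1 - z) ^ 2` equals
`2πi · max (-p) 0`. By Cauchy's theorem `I p = 0` for `p ≥ 0`, and dividing
`z ^ p (1 - z) ^ 2 = z ^ p - 2 z ^ (p + 1) + z ^ (p + 2)` by `(1 - z) ^ 2` gives the recurrence
`I p = 2 I (p + 1) - I (p + 2) + 2πi [p = -1]`, from which the formula follows by downward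
induction. The terms with `j ≥ l` then drop out, leaving the double sum defining `Δ*_n(k)`.
-/

open Metric Real

theorem deltaStar_eq_sum_product (n k : ℕ) :
    deltaStar n k = ∑ x ∈ range (k + 1) ×ˢ range (n + 1 - k + 1),
      ((x.1 - x.2 : ℕ) : ℝ) * k.choose x.1 * (n + 1 - k).choose x.2 * (1 / n) ^ (x.2 + x.1) := by
  set m := n + 1 - k
  have hIcc : Icc 1 k ⊆ range (k + 1) := fun l hl => by simp at hl ⊢; omega
  rw [deltaStar, sum_product, ← sum_subset hIcc fun l hlk hl => by
    obtain rfl : l = 0 := by simp at hlk hl; omega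
    simp]
  refine sum_congr rfl fun l _ => ?_
  set g : ℕ → ℝ := fun j => ((l - j : ℕ) : ℝ) * k.choose l * m.choose j * (1 / n) ^ (j + l)
  calc ∑ j ∈ range l, ((l : ℝ) - j) * k.choose l * m.choose j * (1 / n) ^ (j + l)
      = ∑ j ∈ range l, g j := sum_congr rfl fun j hj => by
        simp only [g]; rw [Nat.cast_sub (mem_range.1 hj).le]
    _ = ∑ j ∈ range (l + (m + 1)), g j := sum_subset (range_mono (by omega)) fun j _ hj => by
        simp [g, Nat.sub_eq_zero_of_le (not_lt.1 (mem_range.not.1 hj))]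
    _ = ∑ j ∈ range (m + 1), g j := (sum_subset (range_mono (by omega)) fun j _ hj => by
        simp [g, Nat.choose_eq_zero_of_lt (not_lt.1 (mem_range.not.1 hj))]).symm

theorem one_add_mul_inv_pow_mul_one_add_mul_pow {K : Type*} [Field K] {z : K} (hz : z ≠ 0)
    (c : K) (k m : ℕ) :
    (1 + c * z⁻¹) ^ k * (1 + c * z) ^ m = ∑ x ∈ range (k + 1) ×ˢ range (m + 1),
      k.choose x.1 * m.choose x.2 * c ^ (x.1 + x.2) * z ^ ((x.2 : ℤ) - x.1) := by
  rw [add_comm 1, add_comm 1, add_pow, add_pow, sum_mul_sum, sum_product]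
  refine sum_congr rfl fun l _ => sum_congr rfl fun j _ => ?_
  rw [zpow_sub₀ hz, zpow_natCast, zpow_natCast, mul_pow, mul_pow, inv_pow]
  field_simp
  ring

section

variable {r : ℝ}

theorem ne_zero_and_ne_one_of_mem_sphere (hr0 : 0 < r) (hr1 : r < 1) {z : ℂ}
    (hz : z ∈ sphere (0 : ℂ) r) : z ≠ 0 ∧ z ≠ 1 := by
  rw [mem_sphere_zero_iff_norm] at hz
  constructor <;> rintro rfl <;> simp at hz <;> linarith

theorem circleIntegral_mul_inv_one_sub_sq_eq_zero (hr0 : 0 ≤ r) (hr1 : r < 1) {f : ℂ → ℂ}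
    (hf : Differentiable ℂ f) : ∮ z in C(0, r), f z * ((1 - z) ^ 2)⁻¹ = 0 := by
  have hd : DifferentiableOn ℂ (fun z => f z * ((1 - z) ^ 2)⁻¹) (closedBall 0 r) := by
    intro z hz
    have hz1 : (1 - z) ^ 2 ≠ 0 := by
      rw [mem_closedBall_zero_iff] at hz
      refine pow_ne_zero 2 (sub_ne_zero.2 ?_)
      rintro rfl; simp at hz; linarith
    exact ((hf z).mul ((by fun_prop : DifferentiableAt ℂ (fun z => (1 - z) ^ 2) z).inv
      hz1)).differentiableWithinAt
  exact circleIntegral_eq_zero_of_differentiable_on_off_countable hr0 Set.countable_empty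
    hd.continuousOn fun z hz => hd.differentiableAt (closedBall_mem_nhds_of_mem hz.1)

theorem circleIntegrable_zpow_mul_inv_one_sub_sq (hr0 : 0 < r) (hr1 : r < 1) (p : ℤ) :
    CircleIntegrable (fun z => z ^ p * ((1 - z) ^ 2)⁻¹) 0 r := by
  refine ContinuousOn.circleIntegrable hr0.le fun z hz => ?_
  obtain ⟨hz0, hz1⟩ := ne_zero_and_ne_one_of_mem_sphere hr0 hr1 hz
  exact ((continuousAt_zpow₀ z p (.inl hz0)).mul ((by fun_prop : Continuous fun z : ℂ =>
    (1 - z) ^ 2).continuousAt.inv₀ (pow_ne_zero 2 (sub_ne_zero.2 hz1.symm)))).continuousWithinAt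

/-- Integrating `z ^ p = z ^ p (1 - z)² / (1 - z)²` with `(1 - z)² = 1 - 2z + z²` expanded. -/
theorem circleIntegral_zpow_mul_inv_one_sub_sq_recurrence (hr0 : 0 < r) (hr1 : r < 1) (p : ℤ) :
    ∮ z in C(0, r), z ^ p * ((1 - z) ^ 2)⁻¹ =
      2 * (∮ z in C(0, r), z ^ (p + 1) * ((1 - z) ^ 2)⁻¹)
        - (∮ z in C(0, r), z ^ (p + 2) * ((1 - z) ^ 2)⁻¹)
        + if p = -1 then 2 * π * I else 0 := by
  have hzpow : ∮ z in C(0, r), z ^ p = if p = -1 then 2 * π * I else 0 := by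
    split_ifs with hp
    · simpa [hp] using circleIntegral.integral_sub_center_inv 0 hr0.ne'
    · simpa using circleIntegral.integral_sub_zpow_of_ne hp 0 0 r
  have hint := circleIntegrable_zpow_mul_inv_one_sub_sq hr0 hr1
  calc ∮ z in C(0, r), z ^ p * ((1 - z) ^ 2)⁻¹
      = ∮ z in C(0, r), (2 * (z ^ (p + 1) * ((1 - z) ^ 2)⁻¹) - z ^ (p + 2) * ((1 - z) ^ 2)⁻¹
          + z ^ p) := circleIntegral.integral_congr hr0.le fun z hz => by
        obtain ⟨hz0, hz1⟩ := ne_zero_and_ne_one_of_mem_sphere hr0 hr1 hz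
        have : (1 - z) ^ 2 ≠ 0 := pow_ne_zero 2 (sub_ne_zero.2 hz1.symm)
        simp only [zpow_add₀ hz0, zpow_one, zpow_two]
        field_simp
        ring
    _ = _ := by
      rw [circleIntegral.integral_add, circleIntegral.integral_sub,
        circleIntegral.integral_const_mul, hzpow]
      · exact (hint _).const_smul (a := (2 : ℂ))
      · exact hint _
      · exact ((hint _).const_smul (a := (2 : ℂ))).sub (hint _)
      · refine ContinuousOn.circleIntegrable hr0.le fun z hz => ?_
        exact (continuousAt_zpow₀ z p
          (.inl (ne_zero_and_ne_one_of_mem_sphere hr0 hr1 hz).1)).continuousWithinAt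

theorem circleIntegral_zpow_mul_inv_one_sub_sq (hr0 : 0 < r) (hr1 : r < 1) (p : ℤ) :
    ∮ z in C(0, r), z ^ p * ((1 - z) ^ 2)⁻¹ = 2 * π * I * (-p).toNat := by
  suffices h : ∀ q : ℕ, ∀ p : ℤ, -q ≤ p →
      ∮ z in C(0, r), z ^ p * ((1 - z) ^ 2)⁻¹ = 2 * π * I * (-p).toNat from
    h p.natAbs p (by omega)
  intro q
  induction q with
  | zero =>
    intro p hp
    lift p to ℕ using by omega
    simpa using circleIntegral_mul_inv_one_sub_sq_eq_zero hr0.le hr1 (differentiable_pow p)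
  | succ q ih =>
    intro p hp
    rcases (show -(q : ℤ) ≤ p ∨ p = -(q + 1) by omega) with hq | rfl
    · exact ih p hq
    have hcoeff : ((-(-(q + 1) : ℤ)).toNat : ℤ) = 2 * (-(-(q + 1) + 1 : ℤ)).toNat
        - (-(-(q + 1) + 2 : ℤ)).toNat + if (-(q + 1) : ℤ) = -1 then 1 else 0 := by
      split_ifs <;> omega
    rw [circleIntegral_zpow_mul_inv_one_sub_sq_recurrence hr0 hr1, ih _ (by omega), ih _ (by omega)]
    have := congrArg (fun x : ℤ => 2 * π * I * x) hcoeff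
    push_cast at this ⊢
    split_ifs at this ⊢ <;> linear_combination -this

theorem circleIntegral_sum_mul_zpow_mul_inv_one_sub_sq (hr0 : 0 < r) (hr1 : r < 1) {ι : Type*}
    (s : Finset ι) (a : ι → ℂ) (e : ι → ℤ) :
    ∮ z in C(0, r), ∑ i ∈ s, a i * (z ^ e i * ((1 - z) ^ 2)⁻¹) =
      2 * π * I * ∑ i ∈ s, a i * (-e i).toNat := by
  rw [circleIntegral.integral_fun_sum (f := fun i z => a i * (z ^ e i * ((1 - z) ^ 2)⁻¹))
    fun i _ => (circleIntegrable_zpow_mul_inv_one_sub_sq hr0 hr1 (e i)).const_smul (a := a i),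
    mul_sum]
  refine sum_congr rfl fun i _ => ?_
  rw [circleIntegral.integral_const_mul, circleIntegral_zpow_mul_inv_one_sub_sq hr0 hr1]
  ring

end

/-- The coefficient of `z⁻¹` is expressed as the residue at `0`: `(2πi)⁻¹` times the integral
over a circle around `0` that does not enclose the pole at `1`. -/
theorem deltaStar_eq_laurent_coeff_general (n k : ℕ)
    (r : ℝ) (hr0 : 0 < r) (hr1 : r < 1) :
    (2 * Real.pi * Complex.I)⁻¹ *
      (∮ z in C(0, r),
        ((1 - z) ^ 2)⁻¹ * (1 + 1 / (n * z)) ^ k * (1 + z / n) ^ (n + 1 - k))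
      = (deltaStar n k : ℂ) := by
  set s := range (k + 1) ×ˢ range (n + 1 - k + 1)
  set a : ℕ × ℕ → ℂ := fun x => k.choose x.1 * (n + 1 - k).choose x.2 * (n : ℂ)⁻¹ ^ (x.1 + x.2)
  have hexpand :
      ∮ z in C(0, r), ((1 - z) ^ 2)⁻¹ * (1 + 1 / (n * z)) ^ k * (1 + z / n) ^ (n + 1 - k)
        = ∮ z in C(0, r), ∑ x ∈ s, a x * (z ^ ((x.2 : ℤ) - x.1) * ((1 - z) ^ 2)⁻¹) := by
    refine circleIntegral.integral_congr hr0.le fun z hz => ?_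
    rw [one_div, mul_inv, div_eq_inv_mul, mul_assoc, one_add_mul_inv_pow_mul_one_add_mul_pow
      (ne_zero_and_ne_one_of_mem_sphere hr0 hr1 hz).1, mul_sum]
    exact sum_congr rfl fun x _ => by ring
  rw [hexpand, circleIntegral_sum_mul_zpow_mul_inv_one_sub_sq hr0 hr1, ← mul_assoc,
    inv_mul_cancel₀ two_pi_I_ne_zero, one_mul, deltaStar_eq_sum_product]
  push_cast
  refine sum_congr rfl fun x _ => ?_
  rw [show (-((x.2 : ℤ) - x.1)).toNat = x.1 - x.2 by omega]
  ring

/-- `Δ*_n(k)` equals the coefficient of `z⁻¹` in the Laurent expansion of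
`(1 - z)⁻² (1 + 1/(nz))^k (1 + z/n)^{n+1-k}` around `0`, expressed as the
residue at `0`, i.e. as `(2πi)⁻¹` times the contour integral over any small
circle around the origin. -/
theorem deltaStar_eq_laurent_coeff (n k : ℕ) (hn : 1 ≤ n) (hk : k ≤ n + 1)
    (r : ℝ) (hr0 : 0 < r) (hr1 : r < 1) :
    (2 * Real.pi * Complex.I)⁻¹ *
      (∮ z in C(0, r),
        ((1 - z) ^ 2)⁻¹ * (1 + 1 / (n * z)) ^ k * (1 + z / n) ^ (n + 1 - k))
      = (deltaStar n k : ℂ) :=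
  deltaStar_eq_laurent_coeff_general n k r hr0 hr1
end

section
/- For k ∈ {0, ..., n} and n ≥ 1, the differences of the normalized drift satisfy 1/n ≤ Δ*_n(k+1) − Δ*_n(k) ≤ 2e/n. -/
open Finset

/-!
With `p = 1/n`, `Δ*_n(k)` is the bivariate binomial sum
`F(x, y) = ∑ C(x,a) C(y,b) p^(a+b) (a - b)⁺` at `x = k`, `y = n + 1 - k`
(the positive part is natural-number subtraction). Pascal's rule in each variable gives
`F(k+1, n-k) - F(k, n-k+1) = p ∑ C(k,a) C(n-k,b) p^(a+b) w(a,b)` with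
`w(a,b) = (a+1-b)⁺ - (a-b-1)⁺ ∈ [0, 2]` and `w(0,0) = 1`. Hence the last sum lies between
`1` and `2 (1 + 1/n)^n ≤ 2e`.
-/

section BinomSum

variable {R : Type*} [CommSemiring R]

def binomSum (p : R) (x : ℕ) (f : ℕ → R) : R :=
  ∑ a ∈ range (x + 1), (x.choose a : R) * (p ^ a * f a)

def binomSum₂ (p : R) (x y : ℕ) (g : ℕ → ℕ → R) : R :=
  binomSum p x fun a => binomSum p y (g a)

theorem binomSum_succ (p : R) (x : ℕ) (f : ℕ → R) :
    binomSum p (x + 1) f = binomSum p x f + p * binomSum p x (fun a => f (a + 1)) := by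
  simpa [binomSum, mul_sum, pow_succ, mul_left_comm, mul_assoc] using
    sum_choose_succ_mul (fun a _ => p ^ a * f a) x

theorem binomSum_add (p : R) (x : ℕ) (f g : ℕ → R) :
    binomSum p x (fun a => f a + g a) = binomSum p x f + binomSum p x g := by
  simp only [binomSum, mul_add, sum_add_distrib]

theorem binomSum_mul_left (p c : R) (x : ℕ) (f : ℕ → R) :
    binomSum p x (fun a => c * f a) = c * binomSum p x f := by
  simp only [binomSum, mul_sum]
  exact sum_congr rfl fun _ _ => by ring

theorem binomSum_const (p c : R) (x : ℕ) : binomSum p x (fun _ => c) = c * (1 + p) ^ x := by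
  simp only [binomSum, add_comm (1 : R), add_pow, one_pow, mul_one, mul_sum]
  exact sum_congr rfl fun _ _ => by ring

variable [PartialOrder R] [IsOrderedRing R]

theorem binomSum_mono {p : R} (hp : 0 ≤ p) (x : ℕ) {f g : ℕ → R}
    (hfg : ∀ a, f a ≤ g a) :
    binomSum p x f ≤ binomSum p x g :=
  sum_le_sum fun a _ => by gcongr; exact hfg a

theorem apply_zero_le_binomSum {p : R} (hp : 0 ≤ p) (x : ℕ) {f : ℕ → R}
    (hf : ∀ a, 0 ≤ f a) :
    f 0 ≤ binomSum p x f := by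
  unfold binomSum
  simpa using single_le_sum (f := fun a => (x.choose a : R) * (p ^ a * f a))
    (fun a _ => by have := hf a; positivity) (mem_range.mpr x.succ_pos)

theorem binomSum₂_le {p : R} (hp : 0 ≤ p) (x y : ℕ) {g : ℕ → ℕ → R} {c : R}
    (hg : ∀ a b, g a b ≤ c) :
    binomSum₂ p x y g ≤ c * (1 + p) ^ (x + y) := by
  calc binomSum₂ p x y g ≤ binomSum p x (fun _ => c * (1 + p) ^ y) :=
        binomSum_mono hp x fun a => (binomSum_mono hp y (hg a)).trans_eq (binomSum_const p c y)
    _ = c * (1 + p) ^ (x + y) := by rw [binomSum_const, pow_add]; ring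

theorem apply_zero_zero_le_binomSum₂ {p : R} (hp : 0 ≤ p) (x y : ℕ) {g : ℕ → ℕ → R}
    (hg : ∀ a b, 0 ≤ g a b) : g 0 0 ≤ binomSum₂ p x y g :=
  (apply_zero_le_binomSum hp y (hg 0)).trans <|
    apply_zero_le_binomSum hp x fun a => (hg a 0).trans (apply_zero_le_binomSum hp y (hg a))

end BinomSum

section BinomSumRing

variable {R : Type*} [CommRing R]

theorem binomSum_sub (p : R) (x : ℕ) (f g : ℕ → R) :
    binomSum p x (fun a => f a - g a) = binomSum p x f - binomSum p x g := by
  simp only [binomSum, mul_sub, sum_sub_distrib]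

theorem binomSum₂_succ_sub (p : R) (x y : ℕ) (g : ℕ → ℕ → R) :
    binomSum₂ p (x + 1) y g - binomSum₂ p x (y + 1) g =
      p * binomSum₂ p x y (fun a b => g (a + 1) b - g a (b + 1)) := by
  simp only [binomSum₂, binomSum_succ, binomSum_add, binomSum_sub, binomSum_mul_left]
  ring

end BinomSumRing

theorem deltaStar_eq_binomSum₂ (n k : ℕ) :
    deltaStar n k = binomSum₂ (1 / n : ℝ) k (n + 1 - k) fun a b => ((a - b : ℕ) : ℝ) := by
  set m := n + 1 - k
  set p : ℝ := 1 / n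
  have inner (l : ℕ) :
      ∑ j ∈ range l, ((l : ℝ) - j) * (k.choose l) * (m.choose j) * p ^ (j + l) =
      (k.choose l) * (p ^ l * binomSum p m fun j => ((l - j : ℕ) : ℝ)) := by
    set F : ℕ → ℝ := fun j =>
      (k.choose l) * (p ^ l * ((m.choose j) * (p ^ j * ((l - j : ℕ) : ℝ))))
    have hF : ∀ j ≥ min l (m + 1), F j = 0 := by
      intro j hj
      rcases min_le_iff.mp hj with hj | hj
      · simp [F, Nat.sub_eq_zero_of_le hj]
      · simp [F, Nat.choose_eq_zero_of_lt (Nat.lt_of_succ_le hj)]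
    calc _ = ∑ j ∈ range l, F j := sum_congr rfl fun j hj => by
            simp only [F]; rw [Nat.cast_sub (mem_range.mp hj).le, pow_add]; ring
      _ = ∑ j ∈ range (m + 1), F j := by
            rw [eventually_constant_sum hF (min_le_left _ _),
              eventually_constant_sum hF (min_le_right _ _)]
      _ = _ := by simp only [F, binomSum, mul_sum]
  rw [binomSum₂, binomSum, sum_range_eq_add_Ico _ k.add_one_pos]
  simp only [Nat.zero_sub, Nat.cast_zero, binomSum_const, zero_mul, mul_zero, zero_add, ← inner]
  rw [deltaStar, Ico_add_one_right_eq_Icc]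

theorem deltaStar_succ_sub (n k : ℕ) (hk : k ≤ n) :
    deltaStar n (k + 1) - deltaStar n k =
      1 / n * binomSum₂ (1 / n : ℝ) k (n - k)
        fun a b => ((a + 1 - b : ℕ) : ℝ) - ((a - (b + 1) : ℕ) : ℝ) := by
  rw [deltaStar_eq_binomSum₂, deltaStar_eq_binomSum₂, Nat.add_sub_add_right,
    Nat.sub_add_comm hk, binomSum₂_succ_sub]

theorem deltaStar_diff_bounds_general (n k : ℕ) (hk : k ≤ n) :
    1 / (n : ℝ) ≤ deltaStar n (k + 1) - deltaStar n k ∧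
      deltaStar n (k + 1) - deltaStar n k ≤ 2 * Real.exp 1 / n := by
  set w : ℕ → ℕ → ℝ := fun a b => ((a + 1 - b : ℕ) : ℝ) - ((a - (b + 1) : ℕ) : ℝ)
  have hw_nonneg (a b : ℕ) : 0 ≤ w a b :=
    sub_nonneg.2 (by exact_mod_cast (by omega : a - (b + 1) ≤ a + 1 - b))
  have hw_le_two (a b : ℕ) : w a b ≤ 2 :=
    sub_le_iff_le_add.2 (by exact_mod_cast (by omega : a + 1 - b ≤ 2 + (a - (b + 1))))
  have hp : (0 : ℝ) ≤ 1 / n := by positivity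
  rw [deltaStar_succ_sub n k hk]
  constructor
  · calc 1 / (n : ℝ) = 1 / n * w 0 0 := by simp [w]
      _ ≤ _ := by gcongr; exact apply_zero_zero_le_binomSum₂ hp _ _ hw_nonneg
  · calc _ ≤ 1 / (n : ℝ) * (2 * (1 + 1 / n) ^ n) := by
          gcongr; simpa [Nat.add_sub_cancel' hk] using binomSum₂_le hp k (n - k) hw_le_two
      _ ≤ 1 / n * (2 * Real.exp 1) := by
          gcongr; simpa using Real.one_add_inv_pow_le_exp (n := n)
      _ = 2 * Real.exp 1 / n := by ring

/-- For `k ∈ {0, …, n}` the differences of the normalized drift satisfy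
`1/n ≤ Δ*_n(k+1) − Δ*_n(k) ≤ 2e/n`. -/
theorem deltaStar_diff_bounds (n k : ℕ) (hn : 1 ≤ n) (hk : k ≤ n) :
    1 / (n : ℝ) ≤ deltaStar n (k + 1) - deltaStar n k ∧
      deltaStar n (k + 1) - deltaStar n k ≤ 2 * Real.exp 1 / n :=
  deltaStar_diff_bounds_general n k hk
end

section
/- For k ∈ {0, ..., n−1} and n ≥ 2, the drift Δ_n(k) of the (1+1) EA on OneMax satisfies 1/(en) ≤ Δ_n(k+1) − Δ_n(k) ≤ 2/(n−1). -/
open Finset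

/-- Drift `Δ_n(k)`: the expected one-step decrease of the number of zero-bits of
the (1+1) EA (mutation rate `1/n`) on OneMax from a state with `k` zero-bits. -/
noncomputable def Delta (n k : ℕ) : ℝ :=
  ∑ l ∈ Icc 1 k, ∑ j ∈ range (l + 1),
    ((l : ℝ) - j) * (k.choose l) * ((n - k).choose j) *
      (1 / n) ^ (l + j) * (1 - 1 / n) ^ (n - l - j)

/-!
Write `Δ_n(k) = 𝔼[(L - J)⁺]` with independent `L ~ Bin(k, 1/n)` (flipped zero-bits) and
`J ~ Bin(n - k, 1/n)` (flipped one-bits). Passing from `k` to `k + 1` turns one one-bit into a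
zero-bit, and conditioning on whether that bit flips gives
`Δ_n(k+1) - Δ_n(k) = (1/n) 𝔼[(L - J + 1)⁺ - (L - J - 1)⁺]` with `L ~ Bin(k, 1/n)` and
`J ~ Bin(n - 1 - k, 1/n)`. The integrand takes values in `[0, 2]` and equals `1` on the event
`L = J = 0`, of probability `(1 - 1/n)^(n-1) ≥ 1/e`.
-/

section CommRing

variable {R : Type*} [CommRing R]

/-- The expectation of `f L` for `L ~ Bin(a, p)` when `q = 1 - p`; keeping `q` free makes the
algebra ring-generic. -/
def binomialExpect (p q : R) (a : ℕ) (f : ℕ → R) : R :=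
  ∑ l ∈ range (a + 1), p ^ l * q ^ (a - l) * a.choose l * f l

def binomialDiffExpect (p q : R) (a b : ℕ) (h : ℤ → R) : R :=
  binomialExpect p q a fun l => binomialExpect p q b fun j => h (l - j)

variable {p q : R}

theorem binomialExpect_const (a : ℕ) (c : R) :
    binomialExpect p q a (fun _ => c) = (p + q) ^ a * c := by
  rw [binomialExpect, add_pow, sum_mul]

theorem binomialExpect_add (a : ℕ) (f g : ℕ → R) :
    binomialExpect p q a (fun l => f l + g l) =
      binomialExpect p q a f + binomialExpect p q a g := by
  simp only [binomialExpect, mul_add, sum_add_distrib]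

theorem binomialExpect_sub (a : ℕ) (f g : ℕ → R) :
    binomialExpect p q a (fun l => f l - g l) =
      binomialExpect p q a f - binomialExpect p q a g := by
  simp only [binomialExpect, mul_sub, sum_sub_distrib]

theorem binomialExpect_const_mul (a : ℕ) (c : R) (f : ℕ → R) :
    binomialExpect p q a (fun l => c * f l) = c * binomialExpect p q a f := by
  simp only [binomialExpect, mul_sum]
  exact sum_congr rfl fun _ _ => by ring

theorem binomialExpect_succ (a : ℕ) (f : ℕ → R) :
    binomialExpect p q (a + 1) f = binomialExpect p q a fun l => q * f l + p * f (l + 1) := by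
  have hshift : ∑ l ∈ range (a + 1), p ^ (l + 1) * q ^ (a - l) * a.choose (l + 1) * f (l + 1)
      + q ^ (a + 1) * f 0 =
        ∑ l ∈ range (a + 1), p ^ l * q ^ (a - l) * a.choose l * (q * f l) := by
    have h := sum_range_succ' (fun l => p ^ l * q ^ (a + 1 - l) * a.choose l * f l) (a + 1)
    simp only [sum_range_succ _ (a + 1), Nat.choose_succ_self, Nat.cast_zero, mul_zero, zero_mul,
      add_zero, Nat.add_sub_add_right, pow_zero, Nat.choose_zero_right, Nat.cast_one, one_mul,
      mul_one, Nat.sub_zero] at h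
    rw [← h]
    refine sum_congr rfl fun l hl => ?_
    rw [Nat.sub_add_comm (Nat.lt_succ_iff.mp (mem_range.mp hl)), pow_succ]
    ring
  have hsplit : ∑ l ∈ range (a + 1), p ^ (l + 1) * q ^ (a - l) * a.choose l * f (l + 1)
      = ∑ l ∈ range (a + 1), p ^ l * q ^ (a - l) * a.choose l * (p * f (l + 1)) :=
    sum_congr rfl fun _ _ => by ring
  rw [binomialExpect, binomialExpect, sum_range_succ']
  simp only [mul_add, sum_add_distrib, ← hshift, Nat.choose_succ_succ', Nat.cast_add, add_mul,
    Nat.add_sub_add_right, pow_zero, Nat.sub_zero, Nat.choose_zero_right, Nat.cast_one, one_mul]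
  rw [hsplit, mul_one]
  ring

theorem binomialDiffExpect_succ_left_sub_succ_right (a b : ℕ) (h : ℤ → R) :
    binomialDiffExpect p q (a + 1) b h - binomialDiffExpect p q a (b + 1) h =
      p * binomialDiffExpect p q a b fun z => h (z + 1) - h (z - 1) := by
  simp only [binomialDiffExpect, binomialExpect_succ]
  rw [← binomialExpect_sub, ← binomialExpect_const_mul]
  congr 1
  funext l
  rw [← binomialExpect_const_mul, ← binomialExpect_const_mul, ← binomialExpect_add,
    ← binomialExpect_sub, ← binomialExpect_const_mul]
  congr 1
  funext j
  rw [show ((l + 1 : ℕ) : ℤ) - j = l - j + 1 by push_cast; ring,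
    show (l : ℤ) - (j + 1 : ℕ) = l - j - 1 by push_cast; ring]
  ring

end CommRing

section OrderedRing

variable {R : Type*} [CommRing R] [PartialOrder R] [IsOrderedRing R] {p q : R}

theorem binomialExpect_mono (hp : 0 ≤ p) (hq : 0 ≤ q) (a : ℕ) {f g : ℕ → R}
    (hfg : ∀ l, f l ≤ g l) : binomialExpect p q a f ≤ binomialExpect p q a g :=
  sum_le_sum fun l _ => mul_le_mul_of_nonneg_left (hfg l) (by positivity)

theorem binomialExpect_nonneg (hp : 0 ≤ p) (hq : 0 ≤ q) (a : ℕ) {f : ℕ → R}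
    (hf : ∀ l, 0 ≤ f l) : 0 ≤ binomialExpect p q a f := by
  simpa [binomialExpect_const] using binomialExpect_mono hp hq a (f := fun _ => 0) hf

theorem pow_mul_apply_zero_le_binomialExpect (hp : 0 ≤ p) (hq : 0 ≤ q) (a : ℕ) {f : ℕ → R}
    (hf : ∀ l, 0 ≤ f l) : q ^ a * f 0 ≤ binomialExpect p q a f := by
  simpa [binomialExpect] using single_le_sum (f := fun l => p ^ l * q ^ (a - l) * a.choose l * f l)
    (fun l _ => mul_nonneg (by positivity) (hf l)) (mem_range.2 a.succ_pos)

theorem pow_mul_apply_zero_le_binomialDiffExpect (hp : 0 ≤ p) (hq : 0 ≤ q) (a b : ℕ)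
    {h : ℤ → R} (hh : ∀ z, 0 ≤ h z) : q ^ (a + b) * h 0 ≤ binomialDiffExpect p q a b h :=
  calc q ^ (a + b) * h 0 = q ^ a * (q ^ b * h ((0 : ℕ) - (0 : ℕ))) := by
        simp [pow_add, mul_assoc]
    _ ≤ q ^ a * binomialExpect p q b fun j => h ((0 : ℕ) - j) :=
      mul_le_mul_of_nonneg_left
        (pow_mul_apply_zero_le_binomialExpect (f := fun j : ℕ => h ((0 : ℕ) - j)) hp hq b
          fun _ => hh _) (pow_nonneg hq a)
    _ ≤ binomialDiffExpect p q a b h :=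
      pow_mul_apply_zero_le_binomialExpect
        (f := fun l : ℕ => binomialExpect p q b fun j => h (l - j)) hp hq a
        fun _ => binomialExpect_nonneg hp hq b fun _ => hh _

theorem binomialDiffExpect_le (hp : 0 ≤ p) (hq : 0 ≤ q) (a b : ℕ) {h : ℤ → R} {M : R}
    (hh : ∀ z, h z ≤ M) : binomialDiffExpect p q a b h ≤ (p + q) ^ (a + b) * M :=
  calc binomialDiffExpect p q a b h ≤ binomialExpect p q a fun _ => (p + q) ^ b * M :=
        binomialExpect_mono hp hq a fun _ =>
          (binomialExpect_mono hp hq b fun _ => hh _).trans_eq (binomialExpect_const b M)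
    _ = (p + q) ^ (a + b) * M := by rw [binomialExpect_const, pow_add, mul_assoc]

end OrderedRing

theorem Delta_eq_binomialDiffExpect {n k : ℕ} (hk : k ≤ n) :
    Delta n k = binomialDiffExpect (1 / (n : ℝ)) (1 - 1 / (n : ℝ)) k (n - k)
      fun z => ((max z 0 : ℤ) : ℝ) := by
  let g (l j : ℕ) : ℝ := k.choose l * (n - k).choose j * (1 / (n : ℝ)) ^ (l + j) *
    (1 - 1 / (n : ℝ)) ^ (n - l - j) * ((max ((l : ℤ) - j) 0 : ℤ) : ℝ)
  have hg_of_lt (l j : ℕ) (hlj : l < j) : g l j = 0 := by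
    simp only [g, max_eq_right (by omega : (l : ℤ) - j ≤ 0), Int.cast_zero, mul_zero]
  have hg_of_gt (l j : ℕ) (hj : n - k < j) : g l j = 0 := by
    simp [g, Nat.choose_eq_zero_of_lt hj]
  rw [Delta, binomialDiffExpect, binomialExpect,
    sum_subset (show Icc 1 k ⊆ range (k + 1) from fun l hl => mem_range.2 (by simp at hl; omega))
      fun l hl hl' => by
      obtain rfl : l = 0 := by simp at hl hl'; omega
      simp]
  refine sum_congr rfl fun l hl => ?_
  calc _ = ∑ j ∈ range (l + 1), g l j := sum_congr rfl fun j hj => by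
          simp only [g]
          rw [max_eq_left (by simp at hj; omega)]
          push_cast
          ring
    _ = ∑ j ∈ range (n - k + 1), g l j := by
      rw [← eventually_constant_sum (fun j hj => hg_of_lt l j hj) (le_max_left _ (n - k + 1)),
        eventually_constant_sum (fun j hj => hg_of_gt l j hj) (le_max_right (l + 1) _)]
    _ = _ := by
      rw [binomialExpect, mul_sum]
      refine sum_congr rfl fun j hj => ?_
      simp only [g]
      rw [show n - l - j = (k - l) + (n - k - j) by simp at hl hj; omega, pow_add, pow_add]
      ring

theorem Delta_succ_sub_Delta {n k : ℕ} (hk : k + 1 ≤ n) :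
    Delta n (k + 1) - Delta n k = 1 / n * binomialDiffExpect (1 / (n : ℝ)) (1 - 1 / (n : ℝ)) k
      (n - 1 - k) fun z => ((max (z + 1) 0 : ℤ) : ℝ) - ((max (z - 1) 0 : ℤ) : ℝ) := by
  rw [Delta_eq_binomialDiffExpect hk, Delta_eq_binomialDiffExpect (by omega),
    show n - (k + 1) = n - 1 - k by omega, show n - k = n - 1 - k + 1 by omega]
  exact binomialDiffExpect_succ_left_sub_succ_right k _ _

theorem exp_neg_one_le_one_sub_one_div_pow (n : ℕ) :
    Real.exp (-1) ≤ (1 - 1 / (n : ℝ)) ^ (n - 1) := by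
  rcases n with _ | _ | m
  · simp
  · simp
  · have hq : 1 - 1 / ((m + 2 : ℕ) : ℝ) = (1 + ((m + 1 : ℕ) : ℝ)⁻¹)⁻¹ := by
      push_cast
      field_simp
      ring
    rw [Real.exp_neg, hq, inv_pow, Nat.add_sub_cancel]
    exact inv_anti₀ (by positivity) Real.one_add_inv_pow_le_exp

/-- For `k ∈ {0, …, n−1}` and `n ≥ 2` the drift differences satisfy
`1/(en) ≤ Δ_n(k+1) − Δ_n(k) ≤ 2/(n−1)`. -/
theorem delta_diff_bounds (n k : ℕ) (hn : 2 ≤ n) (hk : k ≤ n - 1) :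
    1 / (Real.exp 1 * n) ≤ Delta n (k + 1) - Delta n k ∧
      Delta n (k + 1) - Delta n k ≤ 2 / ((n : ℝ) - 1) := by
  have hp : (0 : ℝ) ≤ 1 / n := by positivity
  have hq : (0 : ℝ) ≤ 1 - 1 / n :=
    sub_nonneg.2 (div_le_one_of_le₀ (by norm_cast; omega) (by positivity))
  set c : ℤ → ℝ := fun z => ((max (z + 1) 0 : ℤ) : ℝ) - ((max (z - 1) 0 : ℤ) : ℝ)
  have hc_nonneg (z : ℤ) : 0 ≤ c z := by
    simp only [c]
    exact_mod_cast (by omega : 0 ≤ max (z + 1) 0 - max (z - 1) 0)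
  have hc_le (z : ℤ) : c z ≤ 2 := by
    simp only [c]
    exact_mod_cast (by omega : max (z + 1) 0 - max (z - 1) 0 ≤ 2)
  rw [Delta_succ_sub_Delta (by omega)]
  constructor
  · calc 1 / (Real.exp 1 * n) = 1 / n * Real.exp (-1) := by rw [Real.exp_neg]; ring
      _ ≤ 1 / n * ((1 - 1 / n) ^ (k + (n - 1 - k)) * c 0) := by
          gcongr
          simpa [c, show k + (n - 1 - k) = n - 1 by omega] using
            exp_neg_one_le_one_sub_one_div_pow n
      _ ≤ _ := by grw [pow_mul_apply_zero_le_binomialDiffExpect hp hq k _ hc_nonneg]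
  · calc _ ≤ 1 / n * ((1 / n + (1 - 1 / n)) ^ (k + (n - 1 - k)) * 2 : ℝ) := by
          grw [binomialDiffExpect_le hp hq k _ hc_le]
      _ = 2 / n := by ring
      _ ≤ 2 / (n - 1) := by
          have : (2 : ℝ) ≤ n := by exact_mod_cast hn
          gcongr <;> linarith
end

section
/- For n ≥ 2 and k ≥ 1, the drift Δ(k) of the (1+1) EA on OneMax satisfies e^{−1} k/n ≤ Δ(k) ≤ k/n. -/
/-!
Write `p = 1/n`. Bounding `ℓ - j ≤ ℓ` splits each summand of `Δ(k)` into a product of two binomial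
probabilities, `ℓ · Bin(k, p)(ℓ) · Bin(n - k, p)(j)`; the sum over `j ≤ ℓ` is a partial sum of a
probability distribution, hence at most `1`, and what remains is the mean `k p` of `Bin(k, p)`.
For the lower bound, all summands are nonnegative and the one with `ℓ = 1`, `j = 0` equals
`k p (1 - p)^(n-1) ≥ e⁻¹ k/n`, since `(1 + 1/(n-1))^(n-1) ≤ e`.
-/

open Finset

section Binomial

variable {p : ℝ}

def binomialProb (p : ℝ) (m j : ℕ) : ℝ := m.choose j * p ^ j * (1 - p) ^ (m - j)

lemma binomialProb_nonneg (hp₀ : 0 ≤ p) (hp₁ : p ≤ 1) (m j : ℕ) : 0 ≤ binomialProb p m j := by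
  unfold binomialProb
  have : 0 ≤ 1 - p := sub_nonneg.2 hp₁
  positivity

lemma binomialProb_eq_zero_of_lt {m j : ℕ} (h : m < j) : binomialProb p m j = 0 := by
  simp [binomialProb, Nat.choose_eq_zero_of_lt h]

lemma sum_binomialProb (p : ℝ) (m : ℕ) : ∑ j ∈ range (m + 1), binomialProb p m j = 1 := by
  calc _ = (p + (1 - p)) ^ m := by
        rw [add_pow]
        exact sum_congr rfl fun j _ ↦ by unfold binomialProb; ring
    _ = 1 := by rw [add_sub_cancel, one_pow]

lemma sum_range_binomialProb_le_one (hp₀ : 0 ≤ p) (hp₁ : p ≤ 1) (m L : ℕ) :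
    ∑ j ∈ range L, binomialProb p m j ≤ 1 := calc
  _ ≤ ∑ j ∈ range (max L (m + 1)), binomialProb p m j :=
    sum_le_sum_of_subset_of_nonneg (range_subset_range.2 (le_max_left _ _))
      fun j _ _ ↦ binomialProb_nonneg hp₀ hp₁ m j
  _ = ∑ j ∈ range (m + 1), binomialProb p m j := by
    refine (sum_subset (range_subset_range.2 (le_max_right _ _)) fun j _ hj ↦ ?_).symm
    exact binomialProb_eq_zero_of_lt (by simpa using hj)
  _ = 1 := sum_binomialProb p m

lemma add_one_mul_binomialProb_add_one (p : ℝ) (m i : ℕ) :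
    (i + 1) * binomialProb p (m + 1) (i + 1) = (m + 1) * p * binomialProb p m i := by
  have hchoose : ((m + 1 : ℕ) : ℝ) * m.choose i = (m + 1).choose (i + 1) * (i + 1 : ℕ) := by
    exact_mod_cast Nat.add_one_mul_choose_eq m i
  push_cast at hchoose
  unfold binomialProb
  rw [Nat.add_sub_add_right, pow_succ]
  linear_combination p ^ i * p * (1 - p) ^ (m - i) * hchoose.symm

lemma sum_mul_binomialProb (p : ℝ) (m : ℕ) :
    ∑ l ∈ range (m + 1), l * binomialProb p m l = m * p := by
  cases m with
  | zero => simp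
  | succ m =>
    rw [sum_range_succ']
    push_cast
    simp_rw [add_one_mul_binomialProb_add_one, ← mul_sum, sum_binomialProb]
    ring

end Binomial

def oneMaxDrift (p : ℝ) (n k : ℕ) : ℝ :=
  ∑ l ∈ Icc 1 k, ∑ j ∈ range (l + 1),
    ((l : ℝ) - j) * (k.choose l) * ((n - k).choose j) * p ^ (l + j) * (1 - p) ^ (n - l - j)

lemma Delta_eq_oneMaxDrift (n k : ℕ) : Delta n k = oneMaxDrift (1 / n) n k := rfl

section Drift

variable {p : ℝ} {n k : ℕ}

lemma oneMaxDrift_term_le (hp₀ : 0 ≤ p) (hp₁ : p ≤ 1) (hkn : k ≤ n) {l j : ℕ} (hlk : l ≤ k) :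
    ((l : ℝ) - j) * (k.choose l) * ((n - k).choose j) * p ^ (l + j) * (1 - p) ^ (n - l - j) ≤
      l * binomialProb p k l * binomialProb p (n - k) j := by
  rcases lt_or_ge (n - k) j with hj | hj
  -- here the truncated exponent `n - l - j` does not split, but both sides vanish
  · simp [binomialProb, Nat.choose_eq_zero_of_lt hj]
  have hexp : n - l - j = (k - l) + (n - k - j) := by omega
  have hmul : ((l : ℝ) - j) * (k.choose l) * ((n - k).choose j) * p ^ (l + j) *
      (1 - p) ^ (n - l - j) = ((l : ℝ) - j) * (binomialProb p k l * binomialProb p (n - k) j) := by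
    rw [hexp, pow_add, pow_add]; unfold binomialProb; ring
  rw [hmul, mul_assoc]
  have : (0 : ℝ) ≤ (j : ℝ) := j.cast_nonneg
  gcongr
  · exact mul_nonneg (binomialProb_nonneg hp₀ hp₁ _ _) (binomialProb_nonneg hp₀ hp₁ _ _)
  · linarith

lemma oneMaxDrift_le (hp₀ : 0 ≤ p) (hp₁ : p ≤ 1) (hkn : k ≤ n) : oneMaxDrift p n k ≤ k * p := by
  have hmean_nonneg : ∀ l ∈ range (k + 1), 0 ≤ (l : ℝ) * binomialProb p k l :=
    fun l _ ↦ mul_nonneg l.cast_nonneg (binomialProb_nonneg hp₀ hp₁ k l)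
  calc oneMaxDrift p n k ≤ ∑ l ∈ Icc 1 k, l * binomialProb p k l := by
        refine sum_le_sum fun l hl ↦ ?_
        have hlk : l ≤ k := (mem_Icc.1 hl).2
        calc _ ≤ ∑ j ∈ range (l + 1), l * binomialProb p k l * binomialProb p (n - k) j :=
              sum_le_sum fun j _ ↦ oneMaxDrift_term_le hp₀ hp₁ hkn hlk
          _ = l * binomialProb p k l * ∑ j ∈ range (l + 1), binomialProb p (n - k) j :=
              (mul_sum _ _ _).symm
          _ ≤ l * binomialProb p k l :=
              mul_le_of_le_one_right (hmean_nonneg l (mem_range.2 (Nat.lt_succ_of_le hlk)))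
                (sum_range_binomialProb_le_one hp₀ hp₁ _ _)
    _ ≤ ∑ l ∈ range (k + 1), l * binomialProb p k l :=
        sum_le_sum_of_subset_of_nonneg (fun l hl ↦ mem_range.2 (Nat.lt_succ_of_le (mem_Icc.1 hl).2))
          fun l hl _ ↦ hmean_nonneg l hl
    _ = k * p := sum_mul_binomialProb p k

lemma le_oneMaxDrift (hp₀ : 0 ≤ p) (hp₁ : p ≤ 1) :
    k * p * (1 - p) ^ (n - 1) ≤ oneMaxDrift p n k := by
  rcases Nat.eq_zero_or_pos k with rfl | hk
  · simp [oneMaxDrift]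
  have hinner_nonneg : ∀ l ∈ Icc 1 k, 0 ≤ ∑ j ∈ range (l + 1),
      ((l : ℝ) - j) * (k.choose l) * ((n - k).choose j) * p ^ (l + j) * (1 - p) ^ (n - l - j) := by
    intro l _
    refine sum_nonneg fun j hj ↦ ?_
    have : (j : ℝ) ≤ l := by exact_mod_cast Nat.lt_succ_iff.1 (mem_range.1 hj)
    have : 0 ≤ 1 - p := sub_nonneg.2 hp₁
    have : (0 : ℝ) ≤ l - j := by linarith
    positivity
  refine Eq.trans_le ?_ (single_le_sum hinner_nonneg (mem_Icc.2 ⟨le_rfl, hk⟩))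
  simp [sum_range_succ]

end Drift

lemma exp_one_inv_le_one_sub_one_div_pow (n : ℕ) : (Real.exp 1)⁻¹ ≤ (1 - 1 / n) ^ (n - 1) := by
  cases n with
  | zero => simpa using inv_le_one_of_one_le₀ (Real.one_le_exp zero_le_one)
  | succ m =>
    have h : (1 - 1 / (m + 1 : ℝ)) ^ m = ((1 + (m : ℝ)⁻¹) ^ m)⁻¹ := by
      rcases Nat.eq_zero_or_pos m with rfl | _
      · simp
      · rw [← inv_pow]
        congr 1
        field_simp
        ring
    push_cast
    rw [h]
    exact inv_anti₀ (by positivity) Real.one_add_inv_pow_le_exp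

theorem delta_bounds_general (n k : ℕ) (hkn : k ≤ n) :
    (Real.exp 1)⁻¹ * (k / n : ℝ) ≤ Delta n k ∧ Delta n k ≤ (k / n : ℝ) := by
  have hp₀ : (0 : ℝ) ≤ 1 / n := by positivity
  have hp₁ : (1 : ℝ) / n ≤ 1 := by rw [one_div]; exact Nat.cast_inv_le_one n
  rw [Delta_eq_oneMaxDrift]
  constructor
  · calc (Real.exp 1)⁻¹ * (k / n : ℝ) ≤ (1 - 1 / n) ^ (n - 1) * (k / n : ℝ) := by
          gcongr; exact exp_one_inv_le_one_sub_one_div_pow n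
      _ = k * (1 / n) * (1 - 1 / n) ^ (n - 1) := by ring
      _ ≤ _ := le_oneMaxDrift hp₀ hp₁
  · calc _ ≤ k * (1 / n : ℝ) := oneMaxDrift_le hp₀ hp₁ hkn
      _ = k / n := mul_one_div _ _

/-- For every state `k ≥ 1` (of the (1+1) EA on OneMax over `{0,1}ⁿ`, so `k ≤ n`),
the drift satisfies `e⁻¹ k/n ≤ Δ(k) ≤ k/n`. -/
theorem delta_bounds (n k : ℕ) (hn : 2 ≤ n) (hk1 : 1 ≤ k) (hkn : k ≤ n) :
    (Real.exp 1)⁻¹ * (k / n : ℝ) ≤ Delta n k ∧ Delta n k ≤ (k / n : ℝ) :=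
  delta_bounds_general n k hkn
end
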